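/- Let D = diag(1, 1/2, 1/4). For every μ ∈ ℝ ∖ {0} and every z ∈ ℝ ∖ {0}, the level-dependent cancellation operators for p = 0 and one frequency pair satisfy the two-scale relation H_μ(z²) D^{−1} = −D^{−1} H_{μ/2}(−z) H_{μ/2}(z). -/
import Mathlib

open Matrix

/-- The symbol `H_μ(z)` of the minimal cancellation operator `H*_{0,{μ}}`. -/
noncomputable def Hsym (μ z : ℝ) : Matrix (Fin 3) (Fin 3) ℝ :=
  !![z⁻¹ - 1, -Real.sinh μ / μ, (1 - Real.cosh μ) / μ^2;
     0, z⁻¹ - Real.cosh μ, -Real.sinh μ / μ;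
     0, -μ * Real.sinh μ, z⁻¹ - Real.cosh μ]

/-- The diagonal matrix `D = diag(1, 1/2, 1/4)`. -/
noncomputable def D3 : Matrix (Fin 3) (Fin 3) ℝ :=
  Matrix.diagonal ![1, 1/2, 1/4]

lemma helper3 {a b c d e f g h i a' b' c' d' e' f' g' h' i' : ℝ}
    (h0 : a = -a') (h1 : b = -b') (h2 : c = -c') (h3 : d = -d') (h4 : e = -e')
    (h5 : f = -f') (h6 : g = -g') (h7 : h = -h') (h8 : i = -i') :
    !![a,b,c;d,e,f;g,h,i] = -(!![a',b',c';d',e',f';g',h',i'] : Matrix (Fin 3) (Fin 3) ℝ) := by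
  ext j k
  fin_cases j <;> fin_cases k <;>
    simp only [Matrix.neg_apply, Matrix.cons_val', Matrix.cons_val_zero, Matrix.cons_val_one,
      Matrix.head_cons, Matrix.empty_val', Matrix.cons_val_fin_one, Matrix.head_fin_const,
      Matrix.cons_val_two, Matrix.tail_cons, Matrix.of_apply] <;>
    assumption

set_option maxHeartbeats 2000000 in
/-- The two-scale relation `H_μ(z²) D⁻¹ = −D⁻¹ H_{μ/2}(−z) H_{μ/2}(z)` for the
level-dependent cancellation operators (case `p = 0`, one frequency pair). -/
theorem stmt6 : ∀ μ : ℝ, μ ≠ 0 → ∀ z : ℝ, z ≠ 0 →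
    Hsym μ (z^2) * D3⁻¹ = -(D3⁻¹ * (Hsym (μ/2) (-z) * Hsym (μ/2) z)) := by
  intro μ hμ z hz
  have hD : D3⁻¹ = !![1,0,0;0,2,0;0,0,4] := by
    have h1 : D3 * !![1,0,0;0,2,0;0,0,4] = 1 := by
      rw [D3]
      ext i j
      fin_cases i <;> fin_cases j <;>
        simp [Matrix.mul_apply, Fin.sum_univ_succ, Matrix.diagonal, Matrix.one_apply,
          Matrix.vecHead, Matrix.vecTail]
    exact Matrix.inv_eq_right_inv h1
  have hs : Real.sinh μ = 2 * Real.sinh (μ/2) * Real.cosh (μ/2) := by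
    rw [show μ = 2 * (μ/2) by ring, Real.sinh_two_mul]; ring_nf
  have hcs : Real.cosh (μ/2)^2 - Real.sinh (μ/2)^2 = 1 := by
    have := Real.cosh_sq (μ/2); linarith
  have hc : Real.cosh μ = Real.cosh (μ/2)^2 + Real.sinh (μ/2)^2 := by
    rw [show μ = 2 * (μ/2) by ring, Real.cosh_two_mul]; ring_nf
  have hzw : z * z⁻¹ = 1 := mul_inv_cancel₀ hz
  have hmw : μ * μ⁻¹ = 1 := mul_inv_cancel₀ hμ
  have hneg : (-z)⁻¹ = -z⁻¹ := by rw [inv_neg]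
  have hsq : (z^2)⁻¹ = z⁻¹ * z⁻¹ := by rw [← mul_inv, sq]
  rw [hD, Hsym, Hsym, Hsym, hs, hc, hneg, hsq, Matrix.mul_fin_three, Matrix.mul_fin_three,
    Matrix.mul_fin_three]
  generalize Real.sinh (μ/2) = s at *
  generalize Real.cosh (μ/2) = c at *
  generalize z⁻¹ = w at *
  apply helper3
  case h0 => ring
  case h1 => linear_combination 2*s*μ⁻¹*(c-1)*hmw
  case h2 => ring
  case h3 => ring
  case h4 => linear_combination 2*s^2*hmw
  case h5 => ring
  case h6 => ring
  case h7 => ring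
  case h8 => linear_combination 4*s^2*hmw
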